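/- Derivability of G | L ⊢ C ⇒ L' is monotone under adding fresh free locations not mentioned in C: if G | L ⊢ C ⇒ L' is derivable and l₀ ∉ locs(C) ∪ L ∪ L' and l₀ is not a vertex needed by any path condition, then G' | L ∪ {l₀} ⊢ C ⇒ L' ∪ {l₀} is derivable, where G' = G (enlarging the free set with an unused vertex preserves derivability since paths through L remain paths through L ∪ {l₀}). -/

import Mathlib

/-! Induction on the derivation, adding `l₀` to every intermediate free set. Since `l₀` is never
mentioned, the `alloc`/`free` side conditions are unaffected, and `conn` survives because the path
condition is monotone. The only subtle case is a branch, whose join set `L''` must also avoid `l₀`: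
a derivation's output only contains its input and the locations its commands mention. -/

/-- Commands of the command-sequence language. -/
inductive Cmd : Type where
  | alloc : ℕ → Cmd
  | free : ℕ → Cmd
  | conn : ℕ → ℕ → Cmd
  | branch : List Cmd → List Cmd → Cmd
  | loop : List Cmd → Cmd


abbrev Cmds := List Cmd

/-- A path in `G` from `l₁` to `l₂` whose intermediate vertices all lie in `L`. -/
def HasPath (G : SimpleGraph ℕ) (l₁ l₂ : ℕ) (L : Finset ℕ) : Prop :=
  ∃ p : G.Walk l₁ l₂, ∀ v ∈ p.support, v = l₁ ∨ v = l₂ ∨ v ∈ L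

/-- The judgment `G | L ⊢ C ⇒ L'`, parameterized by the path condition `P`. -/
inductive Judg (P : ℕ → ℕ → Finset ℕ → Prop) : Finset ℕ → Cmds → Finset ℕ → Prop where
  | empty (L) : Judg P L [] L
  | alloc {L C L' l} : l ∈ L → Judg P (L.erase l) C L' →
      Judg P L (Cmd.alloc l :: C) L'
  | free {L C L' l} : l ∉ L → Judg P (insert l L) C L' →
      Judg P L (Cmd.free l :: C) L'
  | conn {L C L' l₁ l₂} : P l₁ l₂ L → Judg P L C L' →
      Judg P L (Cmd.conn l₁ l₂ :: C) L'
  | branch {L C₁ C₂ C L'' L'} : Judg P L C₁ L'' → Judg P L C₂ L'' → Judg P L'' C L' →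
      Judg P L (Cmd.branch C₁ C₂ :: C) L'
  | loop {L C₁ C L'} : Judg P L C₁ L → Judg P L C L' →
      Judg P L (Cmd.loop C₁ :: C) L'

mutual
/-- Size of a single command. -/
def csize : Cmd → ℕ
  | .alloc _ => 1
  | .free _ => 1
  | .conn _ _ => 1
  | .branch C₁ C₂ => 1 + size C₁ + size C₂
  | .loop C₁ => 1 + size C₁
/-- Size measure on command sequences. -/
def size : Cmds → ℕ
  | [] => 0
  | c :: C => csize c + size C
end

theorem size_append_aux (C₁ C₂ : Cmds) : size (C₁ ++ C₂) = size C₁ + size C₂ := by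
  induction C₁ with
  | nil => simp [size]
  | cons c C ih => simp [size, ih]; omega

/-- Serialization of command sequences. -/
def ser : Cmds → Cmds
  | [] => []
  | .conn l₁ l₂ :: C => .conn l₁ l₂ :: ser C
  | .alloc l :: C => .alloc l :: (ser C ++ [.free l])
  | .free l :: C => .free l :: (ser C ++ [.alloc l])
  | .branch C₁ C₂ :: C₃ => ser C₁ ++ ser (C₂ ++ C₃)
  | .loop C₁ :: C₂ => ser (C₁ ++ C₂)
termination_by C => size C
decreasing_by
  all_goals simp [size, csize, size_append_aux]
  all_goals omega

mutual
/-- All locations mentioned anywhere in a single command. -/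
def clocsAll : Cmd → Finset ℕ
  | .alloc l => {l}
  | .free l => {l}
  | .conn l₁ l₂ => {l₁, l₂}
  | .branch C₁ C₂ => locsAll C₁ ∪ locsAll C₂
  | .loop C₁ => locsAll C₁
/-- All locations mentioned anywhere in a command sequence. -/
def locsAll : Cmds → Finset ℕ
  | [] => ∅
  | c :: C => clocsAll c ∪ locsAll C
end

theorem hasPath_monotone (G : SimpleGraph ℕ) (l₁ l₂ : ℕ) : Monotone (HasPath G l₁ l₂) := by
  rintro L L'' hsub ⟨p, hp⟩
  exact ⟨p, fun v hv => (hp v hv).imp_right (Or.imp_right (@hsub v))⟩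

namespace Judg

variable {P : ℕ → ℕ → Finset ℕ → Prop}

theorem subset_union_locsAll {L C L'} (h : Judg P L C L') : L' ⊆ L ∪ locsAll C := by
  induction h with
  | empty L => simp [locsAll]
  | alloc _ _ ih | free _ _ ih | conn _ _ ih | loop _ _ _ ih =>
    intro x hx
    have := ih hx
    simp only [locsAll, clocsAll, Finset.mem_union, Finset.mem_erase, Finset.mem_insert,
      Finset.mem_singleton] at this ⊢
    tauto
  | branch _ _ _ ih₁ _ ih =>
    intro x hx
    have := (Finset.mem_union.1 (ih hx)).imp_left (@ih₁ x)
    simp only [locsAll, clocsAll, Finset.mem_union] at this ⊢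
    tauto

theorem insert_fresh (hP : ∀ l₁ l₂, Monotone (P l₁ l₂)) {L C L' l₀}
    (h : Judg P L C L') (h₀ : l₀ ∉ locsAll C) (hL : l₀ ∉ L) :
    Judg P (insert l₀ L) C (insert l₀ L') := by
  induction h with
  | empty L => exact .empty _
  | @alloc L C L' l hl _ ih =>
    simp only [locsAll, clocsAll, Finset.mem_union, Finset.mem_singleton, not_or] at h₀
    refine .alloc (Finset.mem_insert_of_mem hl) ?_
    rw [Finset.erase_insert_of_ne h₀.1]
    exact ih h₀.2 fun h => hL (Finset.mem_of_mem_erase h)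
  | @free L C L' l hl _ ih =>
    simp only [locsAll, clocsAll, Finset.mem_union, Finset.mem_singleton, not_or] at h₀
    refine .free (by simp [Ne.symm h₀.1, hl]) ?_
    rw [Finset.insert_comm]
    exact ih h₀.2 (by simp [h₀.1, hL])
  | conn hp _ ih =>
    simp only [locsAll, Finset.mem_union, not_or] at h₀
    exact .conn (hP _ _ (Finset.subset_insert _ _) hp) (ih h₀.2 hL)
  | branch h₁ _ _ ih₁ ih₂ ih =>
    simp only [locsAll, clocsAll, Finset.mem_union, not_or] at h₀
    have hL'' : l₀ ∉ _ := fun hx => by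
      simpa [hL, h₀.1.1] using h₁.subset_union_locsAll hx
    exact .branch (ih₁ h₀.1.1 hL) (ih₂ h₀.1.2 hL) (ih h₀.2 hL'')
  | loop _ _ ih₁ ih =>
    simp only [locsAll, clocsAll, Finset.mem_union, not_or] at h₀
    exact .loop (ih₁ h₀.1 hL) (ih h₀.2 hL)

end Judg

/-- enlarging the free set with a fresh, unmentioned location
preserves derivability. -/
theorem judg_insert_fresh (G : SimpleGraph ℕ) (L L' : Finset ℕ) (C : Cmds) (l₀ : ℕ)
    (h : Judg (HasPath G) L C L') (h₀ : l₀ ∉ locsAll C) (hL : l₀ ∉ L) (hL' : l₀ ∉ L') :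
    Judg (HasPath G) (insert l₀ L) C (insert l₀ L') :=
  h.insert_fresh (hasPath_monotone G) h₀ hL
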